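/- Let x̂ = (x̂₁, x̂₂) : I → ℝ² be a differentiable curve with x̂₁(t)² − x̂₂(t)² ≠ 0 for all t, let t* be in the closure of I, and suppose that: the Lorentz squared speed |x̂'(t)|² = x̂₁'(t)² − x̂₂'(t)² is bounded as t → t*, x̂₁(t) + x̂₂(t) tends to +∞ as t → t*, and x̂₁(t) − x̂₂(t) tends to a finite limit L ∈ ℝ as t → t*. Then the Lorentz squared norm |(𝒫(σ(x̂(t))))'|² of the derivative of 𝒫 ∘ σ ∘ x̂, which equals 4|x̂'(t)|² / ((1+(x̂₁(t)+x̂₂(t))²)(1+(x̂₁(t)−x̂₂(t))²)), tends to 0 as t → t*. -/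

import Mathlib

open Real Filter

/-- The Lorentz squared norm `|(a,b)|² = a² - b²`. -/
def lsq (u : ℝ × ℝ) : ℝ := u.1 ^ 2 - u.2 ^ 2

/-- The Penrose map `𝒫(x₁,x₂) = (arctan(x₁+x₂) + arctan(x₁−x₂), arctan(x₁+x₂) − arctan(x₁−x₂))`. -/
noncomputable def Penrose (v : ℝ × ℝ) : ℝ × ℝ :=
  (arctan (v.1 + v.2) + arctan (v.1 - v.2), arctan (v.1 + v.2) - arctan (v.1 - v.2))

/-- The Lorentz inversion `σ(v) = v / |v|²`. -/
noncomputable def linv (v : ℝ × ℝ) : ℝ × ℝ := (lsq v)⁻¹ • v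

/-! In the null coordinates `p = x₁ + x₂`, `q = x₁ - x₂` the inversion `σ` acts by
`(p, q) ↦ (1/q, 1/p)`, and `𝒫` has null coordinates `(2 arctan p, 2 arctan q)`. Since
`d/dt arctan (1/q) = -q'/(1 + q²)`, the Lorentz norm of `(𝒫 ∘ σ ∘ x̂)'` is
`4 p'q' / ((1 + p²)(1 + q²))` with `p'q' = |x̂'|²`. Its numerator stays bounded while its
denominator is at least `1 + p² → ∞`. -/

lemma lsq_eq_mul (u : ℝ × ℝ) : lsq u = (u.1 + u.2) * (u.1 - u.2) := by
  unfold lsq; ring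

lemma lsq_add_sub (a b : ℝ) : lsq (a + b, a - b) = 4 * a * b := by
  unfold lsq; ring

lemma linv_fst_add_snd {v : ℝ × ℝ} (hv : lsq v ≠ 0) :
    (linv v).1 + (linv v).2 = (v.1 - v.2)⁻¹ := by
  rw [lsq_eq_mul] at hv
  simp only [linv, Prod.smul_fst, Prod.smul_snd, smul_eq_mul, lsq_eq_mul]
  field_simp [left_ne_zero_of_mul hv, right_ne_zero_of_mul hv]

lemma linv_fst_sub_snd {v : ℝ × ℝ} (hv : lsq v ≠ 0) :
    (linv v).1 - (linv v).2 = (v.1 + v.2)⁻¹ := by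
  rw [lsq_eq_mul] at hv
  simp only [linv, Prod.smul_fst, Prod.smul_snd, smul_eq_mul, lsq_eq_mul]
  field_simp [left_ne_zero_of_mul hv, right_ne_zero_of_mul hv]

lemma HasDerivAt.arctan_inv {f : ℝ → ℝ} {f' x : ℝ} (hf : HasDerivAt f f' x) (hx : f x ≠ 0) :
    HasDerivAt (fun s => Real.arctan (f s)⁻¹) (-f' / (1 + f x ^ 2)) x := by
  convert (hf.inv hx).arctan using 1
  · rfl
  · rw [Pi.inv_apply]
    field_simp
    ring

lemma hasDerivAt_penrose_linv {γ : ℝ → ℝ × ℝ} {γ' : ℝ × ℝ} {t : ℝ} (hγ : HasDerivAt γ γ' t)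
    (ht : lsq (γ t) ≠ 0) :
    HasDerivAt (fun s => Penrose (linv (γ s)))
      (-(γ'.1 - γ'.2) / (1 + ((γ t).1 - (γ t).2) ^ 2)
          + -(γ'.1 + γ'.2) / (1 + ((γ t).1 + (γ t).2) ^ 2),
        -(γ'.1 - γ'.2) / (1 + ((γ t).1 - (γ t).2) ^ 2)
          - -(γ'.1 + γ'.2) / (1 + ((γ t).1 + (γ t).2) ^ 2)) t := by
  have h₁ : HasDerivAt (fun s => (γ s).1) γ'.1 t :=
    (ContinuousLinearMap.fst ℝ ℝ ℝ).hasFDerivAt.comp_hasDerivAt t hγ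
  have h₂ : HasDerivAt (fun s => (γ s).2) γ'.2 t :=
    (ContinuousLinearMap.snd ℝ ℝ ℝ).hasFDerivAt.comp_hasDerivAt t hγ
  have hpq : ((γ t).1 + (γ t).2) * ((γ t).1 - (γ t).2) ≠ 0 := lsq_eq_mul (γ t) ▸ ht
  have hq := HasDerivAt.arctan_inv (h₁.sub h₂) (right_ne_zero_of_mul hpq)
  have hp := HasDerivAt.arctan_inv (h₁.add h₂) (left_ne_zero_of_mul hpq)
  -- The null-coordinate form of `linv` holds only off the light cone, hence only near `t`.
  refine ((hq.add hp).prodMk (hq.sub hp)).congr_of_eventuallyEq ?_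
  have hlsq : ContinuousAt (fun s => lsq (γ s)) t :=
    (by unfold lsq; fun_prop : Continuous lsq).continuousAt.comp hγ.continuousAt
  filter_upwards [hlsq.eventually_ne ht] with s hs
  rw [Penrose, linv_fst_add_snd hs, linv_fst_sub_snd hs]
  rfl

lemma lsq_deriv_penrose_linv {γ : ℝ → ℝ × ℝ} {γ' : ℝ × ℝ} {t : ℝ} (hγ : HasDerivAt γ γ' t)
    (ht : lsq (γ t) ≠ 0) :
    lsq (deriv (fun s => Penrose (linv (γ s))) t) =
      4 * lsq γ' / ((1 + ((γ t).1 + (γ t).2) ^ 2) * (1 + ((γ t).1 - (γ t).2) ^ 2)) := by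
  rw [(hasDerivAt_penrose_linv hγ ht).deriv, lsq_add_sub, lsq_eq_mul γ']
  field_simp

lemma tendsto_div_one_add_sq_mul_one_add_sq {α : Type*} {l : Filter α} {u p q : α → ℝ}
    (hu : ∃ C, ∀ᶠ x in l, |u x| ≤ C) (hp : Tendsto p l atTop) :
    Tendsto (fun x => u x / ((1 + p x ^ 2) * (1 + q x ^ 2))) l (nhds 0) := by
  have hden : Tendsto (fun x => (1 + p x ^ 2) * (1 + q x ^ 2)) l atTop :=
    tendsto_atTop_mono
      (fun x => le_mul_of_one_le_right (by positivity) (le_add_of_nonneg_right (sq_nonneg _)))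
      (tendsto_atTop_add_const_left _ 1 ((tendsto_pow_atTop two_ne_zero).comp hp))
  obtain ⟨C, hC⟩ := hu
  simpa only [div_eq_mul_inv, Pi.inv_apply] using
    bdd_le_mul_tendsto_zero' C hC hden.inv_tendsto_atTop

theorem penrose_blowup_speed_to_zero_general (I : Set ℝ) (xh xh' : ℝ → ℝ × ℝ)
    (hxh : ∀ t ∈ I, HasDerivAt xh (xh' t) t)
    (hne : ∀ t ∈ I, (xh t).1 ^ 2 - (xh t).2 ^ 2 ≠ 0)
    (tstar : ℝ)
    (hbdd : ∃ C : ℝ, ∀ᶠ t in nhdsWithin tstar I, |lsq (xh' t)| ≤ C)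
    (hsum : Tendsto (fun t => (xh t).1 + (xh t).2) (nhdsWithin tstar I) atTop) :
    (∀ t ∈ I, lsq (deriv (fun s => Penrose (linv (xh s))) t) =
      4 * lsq (xh' t) /
        ((1 + ((xh t).1 + (xh t).2) ^ 2) * (1 + ((xh t).1 - (xh t).2) ^ 2))) ∧
    Tendsto (fun t => lsq (deriv (fun s => Penrose (linv (xh s))) t))
      (nhdsWithin tstar I) (nhds 0) := by
  have hderiv := fun t ht => lsq_deriv_penrose_linv (hxh t ht) (hne t ht)
  refine ⟨hderiv, ?_⟩
  have hlim := (tendsto_div_one_add_sq_mul_one_add_sq (q := fun t => (xh t).1 - (xh t).2)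
    hbdd hsum).const_mul 4
  rw [mul_zero] at hlim
  refine hlim.congr' ?_
  filter_upwards [self_mem_nhdsWithin] with t ht
  rw [hderiv t ht, mul_div_assoc]

/-- If a differentiable curve `x̂` with `|x̂|² ≠ 0` has bounded Lorentz squared speed
as `t → t*`, and `x̂₁ + x̂₂ → +∞` while `x̂₁ − x̂₂` tends to a finite limit `L`, then
`|(𝒫(σ(x̂)))'|²`, which equals `4|x̂'|²/((1+(x̂₁+x̂₂)²)(1+(x̂₁−x̂₂)²))`, tends to `0`. -/
theorem penrose_blowup_speed_to_zero (I : Set ℝ) (xh xh' : ℝ → ℝ × ℝ)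
    (hxh : ∀ t ∈ I, HasDerivAt xh (xh' t) t)
    (hne : ∀ t ∈ I, (xh t).1 ^ 2 - (xh t).2 ^ 2 ≠ 0)
    (tstar : ℝ) (htstar : tstar ∈ closure I)
    (hbdd : ∃ C : ℝ, ∀ᶠ t in nhdsWithin tstar I, |lsq (xh' t)| ≤ C)
    (hsum : Tendsto (fun t => (xh t).1 + (xh t).2) (nhdsWithin tstar I) atTop)
    (L : ℝ)
    (hdiff : Tendsto (fun t => (xh t).1 - (xh t).2) (nhdsWithin tstar I) (nhds L)) :
    (∀ t ∈ I, lsq (deriv (fun s => Penrose (linv (xh s))) t) =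
      4 * lsq (xh' t) /
        ((1 + ((xh t).1 + (xh t).2) ^ 2) * (1 + ((xh t).1 - (xh t).2) ^ 2))) ∧
    Tendsto (fun t => lsq (deriv (fun s => Penrose (linv (xh s))) t))
      (nhdsWithin tstar I) (nhds 0) :=
  penrose_blowup_speed_to_zero_general I xh xh' hxh hne tstar hbdd hsum
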